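/- arXiv:1009.1755 — 2 statements merged into one kernel-verified Lean document; each statement's English description precedes it below -/
import Mathlib

section
/- Let φ be a model function with constant C, let t be on the unit circle, K > 0, and suppose λ in the open unit disk satisfies φ(|t-λ|) ≤ K(1-|λ|). Then for every z in the closed unit disk, φ(|t - z·|λ||/3) ≤ (2C + K)·|1 - conj(λ)·z|. -/
/-! With `a = |λ|` and `d = |1 - λ̄z|`, one has `1 - a ≤ d` and `|λ - a z| ≤ 2d`, the latter because
`a (λ - a z) = λ (a - λ̄ z)` and `|a - λ̄ z| ≤ (1 - a) + d`. Hence `|t - a z| ≤ |t - λ| + 2d`, so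
`|t - a z| / 3` is at most `d` or at most `|t - λ|`; in the first case `φ ≤ C d` by linearity, in the
second `φ ≤ φ(|t - λ|) ≤ K (1 - a) ≤ K d`. -/

open Complex

lemma one_sub_norm_le_norm_one_sub_conj_mul {l z : ℂ} (hz : ‖z‖ ≤ 1) :
    1 - ‖l‖ ≤ ‖1 - (starRingEnd ℂ) l * z‖ := by
  have hlz : ‖(starRingEnd ℂ) l * z‖ ≤ ‖l‖ := by
    rw [norm_mul, norm_conj]
    exact mul_le_of_le_one_right (norm_nonneg l) hz
  have := norm_sub_norm_le (1 : ℂ) ((starRingEnd ℂ) l * z)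
  rw [norm_one] at this
  linarith

lemma norm_sub_mul_norm_le_two_mul_norm_one_sub_conj_mul {l z : ℂ} (hl : ‖l‖ ≤ 1) (hz : ‖z‖ ≤ 1) :
    ‖l - z * ‖l‖‖ ≤ 2 * ‖1 - (starRingEnd ℂ) l * z‖ := by
  rcases (norm_nonneg l).eq_or_lt with ha | ha
  · rw [norm_eq_zero.mp ha.symm]
    simp only [norm_zero, ofReal_zero, mul_zero, sub_zero]
    positivity
  set a := ‖l‖
  set d := ‖1 - (starRingEnd ℂ) l * z‖
  have hconj : l * (starRingEnd ℂ) l = (a : ℂ) ^ 2 := by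
    rw [mul_conj, normSq_eq_norm_sq]
    norm_cast
  have hfactor : (a : ℂ) * (l - z * a) = l * (a - (starRingEnd ℂ) l * z) := by
    linear_combination z * hconj
  have hnorm : a * ‖l - z * a‖ = a * ‖(a : ℂ) - (starRingEnd ℂ) l * z‖ := by
    have := congrArg norm hfactor
    rwa [norm_mul, norm_mul, norm_real, Real.norm_of_nonneg ha.le] at this
  have hdist : ‖(a : ℂ) - (starRingEnd ℂ) l * z‖ ≤ (1 - a) + d := by
    have ha1 : ‖(a : ℂ) - 1‖ = 1 - a := by
      rw [← ofReal_one, ← ofReal_sub, norm_real, Real.norm_of_nonpos (by linarith)]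
      ring
    simpa only [ha1] using norm_sub_le_norm_sub_add_norm_sub (a : ℂ) 1 ((starRingEnd ℂ) l * z)
  have h1a : 1 - a ≤ d := one_sub_norm_le_norm_one_sub_conj_mul hz
  refine le_of_mul_le_mul_left ?_ ha
  rw [hnorm]
  exact mul_le_mul_of_nonneg_left (by linarith) ha.le

lemma MonotoneOn.apply_div_three_le {φ : ℝ → ℝ} {C K : ℝ} (hmono : MonotoneOn φ (Set.Ici 0))
    (hlin : ∀ x ≥ (0 : ℝ), φ x ≤ C * x) (hC : 0 ≤ C) (hK : 0 ≤ K) {s e d : ℝ} (hs : 0 ≤ s)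
    (he : 0 ≤ e) (hd : 0 ≤ d) (hsed : s ≤ e + 2 * d) (hφe : φ e ≤ K * d) :
    φ (s / 3) ≤ (2 * C + K) * d := by
  have hs3 : (0 : ℝ) ≤ s / 3 := by positivity
  rcases le_total e d with hed | hde
  · calc φ (s / 3) ≤ φ d := hmono hs3 hd (by linarith)
      _ ≤ C * d := hlin d hd
      _ ≤ (2 * C + K) * d := by nlinarith
  · calc φ (s / 3) ≤ φ e := hmono hs3 he (by linarith)
      _ ≤ K * d := hφe
      _ ≤ (2 * C + K) * d := by nlinarith

theorem vinogradov_lemma_mul_general (φ : ℝ → ℝ) (C K : ℝ) (hC : 0 < C) (hK : 0 < K)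
    (hmono : MonotoneOn φ (Set.Ici 0))
    (hlin : ∀ x ≥ (0:ℝ), φ x ≤ C * x)
    (t l z : ℂ) (hl : ‖l‖ < 1)
    (hstolz : φ (‖t - l‖) ≤ K * (1 - ‖l‖))
    (hz : ‖z‖ ≤ 1) :
    φ (‖t - z * (‖l‖ : ℂ)‖ / 3) ≤
      (2 * C + K) * ‖1 - (starRingEnd ℂ) l * z‖ := by
  have hφe : φ ‖t - l‖ ≤ K * ‖1 - (starRingEnd ℂ) l * z‖ :=
    hstolz.trans (mul_le_mul_of_nonneg_left (one_sub_norm_le_norm_one_sub_conj_mul hz) hK.le)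
  have hsed : ‖t - z * ‖l‖‖ ≤ ‖t - l‖ + 2 * ‖1 - (starRingEnd ℂ) l * z‖ :=
    (norm_sub_le_norm_sub_add_norm_sub _ l _).trans
      (add_le_add_right (norm_sub_mul_norm_le_two_mul_norm_one_sub_conj_mul hl.le hz) _)
  exact hmono.apply_div_three_le hlin hC.le hK.le (norm_nonneg _) (norm_nonneg _) (norm_nonneg _)
    hsed hφe

theorem vinogradov_lemma_mul (φ : ℝ → ℝ) (C K : ℝ) (hC : 0 < C) (hK : 0 < K)
    (hpos : ∀ x ≥ (0:ℝ), 0 ≤ φ x)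
    (hcont : ContinuousOn φ (Set.Ici 0))
    (hmono : MonotoneOn φ (Set.Ici 0))
    (hlin : ∀ x ≥ (0:ℝ), φ x ≤ C * x)
    (t l z : ℂ) (ht : ‖t‖ = 1) (hl : ‖l‖ < 1)
    (hstolz : φ (‖t - l‖) ≤ K * (1 - ‖l‖))
    (hz : ‖z‖ ≤ 1) :
    φ (‖t - z * (‖l‖ : ℂ)‖ / 3) ≤
      (2 * C + K) * ‖1 - (starRingEnd ℂ) l * z‖ :=
  vinogradov_lemma_mul_general φ C K hC hK hmono hlin t l z hl hstolz hz
end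

section
/- Let φ be a model function with constant C, let E be a nonempty closed subset of the unit circle, and K > 0. Let z_1,…,z_N be nonzero points of the open unit disk, each lying in the Stolz region S(E,K) = { λ : |λ| < 1, φ(dist(λ,E)) ≤ K(1-|λ|) }. Let B be the finite Blaschke product with these zeros. Then for every z in the open unit disk, |B'(z)|·φ(dist(z,E)/6)² ≤ 2·(2C+K)²·Σ_{n=1}^N (1 - |z_n|). -/
/-! Each Blaschke factor `b_a` has modulus at most `1` on the disk and
`|b_a'(z)| = (1 - |a|²) / |1 - ā z|²`, so the product rule gives
`|B'(z)| ≤ ∑ (1 - |z_n|²) / D_n²` with `D_n = |1 - z̄_n z|`. Both `|z_n - z|` and `1 - |z_n|` are at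
most `D_n`, hence `dist(z, E) ≤ dist(z_n, E) + D_n` and, according to which summand dominates,
`φ(dist(z, E) / 2)` is at most `φ(D_n) ≤ C D_n` or `φ(dist(z_n, E)) ≤ K (1 - |z_n|) ≤ K D_n`.
Squaring cancels `D_n²`, and `1 - |z_n|² ≤ 2 (1 - |z_n|)`. -/

open Complex ComplexConjugate Finset Metric

theorem norm_deriv_finsetProd_le {𝕜 ι : Type*} [NontriviallyNormedField 𝕜] {u : Finset ι}
    {f : ι → 𝕜 → 𝕜} {f' : ι → 𝕜} {x : 𝕜} (hf : ∀ i ∈ u, HasDerivAt (f i) (f' i) x)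
    (hle : ∀ i ∈ u, ‖f i x‖ ≤ 1) :
    ‖deriv (fun y => ∏ i ∈ u, f i y) x‖ ≤ ∑ i ∈ u, ‖f' i‖ := by
  classical
  rw [(HasDerivAt.fun_finsetProd hf).deriv]
  refine (norm_sum_le _ _).trans (sum_le_sum fun i _ => ?_)
  rw [smul_eq_mul, norm_mul, norm_prod]
  exact mul_le_of_le_one_left (norm_nonneg _)
    (prod_le_one (fun _ _ => norm_nonneg _) fun j hj => hle j (mem_of_mem_erase hj))

theorem normSq_one_sub_conj_mul_sub_normSq_sub (a z : ℂ) :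
    normSq (1 - conj a * z) - normSq (a - z) = (1 - normSq a) * (1 - normSq z) := by
  simp only [normSq_apply, sub_re, sub_im, mul_re, mul_im, one_re, one_im, conj_re, conj_im]
  ring

theorem norm_sub_le_norm_one_sub_conj_mul {a z : ℂ} (ha : ‖a‖ ≤ 1) (hz : ‖z‖ ≤ 1) :
    ‖a - z‖ ≤ ‖1 - conj a * z‖ := by
  have key := normSq_one_sub_conj_mul_sub_normSq_sub a z
  simp only [normSq_eq_norm_sq] at key
  refine le_of_pow_le_pow_left₀ two_ne_zero (norm_nonneg _) ?_
  nlinarith [mul_nonneg (sub_nonneg.2 (pow_le_one₀ (n := 2) (norm_nonneg a) ha))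
    (sub_nonneg.2 (pow_le_one₀ (n := 2) (norm_nonneg z) hz))]

theorem one_sub_norm_mul_norm_le_norm_one_sub_conj_mul (a z : ℂ) :
    1 - ‖a‖ * ‖z‖ ≤ ‖1 - conj a * z‖ := by
  simpa [norm_mul, norm_conj] using norm_sub_norm_le (1 : ℂ) (conj a * z)

theorem norm_one_sub_conj_mul_pos {a z : ℂ} (ha : ‖a‖ < 1) (hz : ‖z‖ ≤ 1) :
    0 < ‖1 - conj a * z‖ := by
  have : ‖a‖ * ‖z‖ < 1 := by nlinarith [norm_nonneg a, norm_nonneg z]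
  linarith [one_sub_norm_mul_norm_le_norm_one_sub_conj_mul a z]

theorem norm_conj_div_norm_le_one (a : ℂ) : ‖conj a / (‖a‖ : ℂ)‖ ≤ 1 := by
  rcases eq_or_ne a 0 with rfl | ha
  · simp
  · rw [norm_div, norm_conj, norm_real, norm_norm, div_self (norm_ne_zero_iff.2 ha)]

-- For `a = 0` the normalising constant is the junk value `0 / 0 = 0`.
noncomputable def blaschkeFactor (a w : ℂ) : ℂ :=
  conj a / (‖a‖ : ℂ) * ((a - w) / (1 - conj a * w))

theorem norm_blaschkeFactor_le_one {a z : ℂ} (ha : ‖a‖ ≤ 1) (hz : ‖z‖ ≤ 1) :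
    ‖blaschkeFactor a z‖ ≤ 1 := by
  rw [blaschkeFactor, norm_mul, norm_div (a - z)]
  exact mul_le_one₀ (norm_conj_div_norm_le_one a) (by positivity)
    (div_le_one_of_le₀ (norm_sub_le_norm_one_sub_conj_mul ha hz) (norm_nonneg _))

theorem hasDerivAt_blaschkeFactor {a z : ℂ} (h : 1 - conj a * z ≠ 0) :
    HasDerivAt (blaschkeFactor a)
      (conj a / (‖a‖ : ℂ) * ((normSq a - 1) / (1 - conj a * z) ^ 2)) z := by
  have hnum : HasDerivAt (fun w => a - w) (-1) z := (hasDerivAt_id z).const_sub a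
  have hden : HasDerivAt (fun w => 1 - conj a * w) (-conj a) z := by
    simpa using ((hasDerivAt_id z).const_mul (conj a)).const_sub 1
  refine ((hnum.div hden h).const_mul _).congr_deriv ?_
  rw [← mul_conj a]
  ring

theorem norm_deriv_blaschkeProduct_le {ι : Type*} {u : Finset ι} {a : ι → ℂ} {z : ℂ}
    (ha : ∀ i ∈ u, ‖a i‖ < 1) (hz : ‖z‖ < 1) :
    ‖deriv (fun w => ∏ i ∈ u, blaschkeFactor (a i) w) z‖ ≤
      ∑ i ∈ u, (1 - ‖a i‖ ^ 2) / ‖1 - conj (a i) * z‖ ^ 2 := by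
  refine (norm_deriv_finsetProd_le
    (fun i hi => hasDerivAt_blaschkeFactor
      (norm_pos_iff.1 (norm_one_sub_conj_mul_pos (ha i hi) hz.le)))
    (fun i hi => norm_blaschkeFactor_le_one (ha i hi).le hz.le)).trans
    (sum_le_sum fun i hi => ?_)
  have hnum : (normSq (a i) : ℂ) - 1 = ((‖a i‖ ^ 2 - 1 : ℝ) : ℂ) := by
    push_cast [normSq_eq_norm_sq]; ring
  have hsq : ‖a i‖ ^ 2 ≤ 1 := pow_le_one₀ (norm_nonneg _) (ha i hi).le
  rw [norm_mul, norm_div (_ - 1), norm_pow, hnum, norm_real, Real.norm_eq_abs,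
    abs_of_nonpos (sub_nonpos.2 hsq), neg_sub]
  exact mul_le_of_le_one_left (by positivity) (norm_conj_div_norm_le_one _)

def stolzRegion (φ : ℝ → ℝ) (E : Set ℂ) (K : ℝ) : Set ℂ :=
  {w | ‖w‖ < 1 ∧ φ (infDist w E) ≤ K * (1 - ‖w‖)}

theorem apply_half_infDist_le_of_mem_stolzRegion {φ : ℝ → ℝ} {C K : ℝ} (hC : 0 ≤ C)
    (hK : 0 ≤ K) (hmono : MonotoneOn φ (Set.Ici 0)) (hlin : ∀ x ≥ (0 : ℝ), φ x ≤ C * x)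
    {E : Set ℂ} {a z : ℂ} (ha : a ∈ stolzRegion φ E K) (hz : ‖z‖ ≤ 1) :
    φ (infDist z E / 2) ≤ (C + K) * ‖1 - conj a * z‖ := by
  obtain ⟨ha1, haS⟩ := ha
  set D := ‖1 - conj a * z‖
  have hD : 0 ≤ D := norm_nonneg _
  have hda : 0 ≤ infDist a E := infDist_nonneg
  have hdz : infDist z E ≤ infDist a E + D := by
    have := norm_sub_le_norm_one_sub_conj_mul ha1.le hz
    rw [← dist_eq_norm, dist_comm] at this
    linarith [infDist_le_infDist_add_dist (x := z) (y := a) (s := E)]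
  have hz0 : 0 ≤ infDist z E / 2 := div_nonneg infDist_nonneg zero_le_two
  rcases le_total (infDist a E) D with hle | hle
  · calc φ (infDist z E / 2) ≤ φ D := hmono hz0 hD (by linarith)
      _ ≤ C * D := hlin D hD
      _ ≤ (C + K) * D := by nlinarith
  · have h1a : 1 - ‖a‖ ≤ D := by
      have := one_sub_norm_mul_norm_le_norm_one_sub_conj_mul a z
      nlinarith [norm_nonneg a]
    calc φ (infDist z E / 2) ≤ φ (infDist a E) := hmono hz0 hda (by linarith)
      _ ≤ K * (1 - ‖a‖) := haS
      _ ≤ (C + K) * D := by nlinarith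

theorem one_sub_sq_div_sq_mul_sq_le {x D p M : ℝ} (hx0 : 0 ≤ x) (hx1 : x ≤ 1) (hD : 0 < D)
    (hp : 0 ≤ p) (hpD : p ≤ M * D) :
    (1 - x ^ 2) / D ^ 2 * p ^ 2 ≤ 2 * M ^ 2 * (1 - x) := by
  have hsq : p ^ 2 ≤ M ^ 2 * D ^ 2 := by rw [← mul_pow]; exact pow_le_pow_left₀ hp hpD 2
  have hx2 : 0 ≤ 1 - x ^ 2 := by nlinarith
  calc (1 - x ^ 2) / D ^ 2 * p ^ 2 ≤ (1 - x ^ 2) / D ^ 2 * (M ^ 2 * D ^ 2) :=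
        mul_le_mul_of_nonneg_left hsq (div_nonneg hx2 (sq_nonneg D))
    _ = (1 - x ^ 2) * M ^ 2 := by field_simp
    _ ≤ 2 * M ^ 2 * (1 - x) := by nlinarith [sq_nonneg M, sq_nonneg (1 - x)]

theorem main_theorem_general (φ : ℝ → ℝ) (C K : ℝ) (hC : 0 < C) (hK : 0 < K)
    (hpos : ∀ x ≥ (0:ℝ), 0 ≤ φ x)
    (hmono : MonotoneOn φ (Set.Ici 0))
    (hlin : ∀ x ≥ (0:ℝ), φ x ≤ C * x)
    (E : Set ℂ)
    (N : ℕ) (f : ℕ → ℂ)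
    (hf1 : ∀ n < N, ‖f n‖ < 1)
    (hfS : ∀ n < N, φ (Metric.infDist (f n) E) ≤ K * (1 - ‖f n‖))
    (z : ℂ) (hz : ‖z‖ < 1) :
    ‖deriv (fun w : ℂ => ∏ n ∈ Finset.range N,
        ((starRingEnd ℂ) (f n) / ((‖f n‖ : ℝ) : ℂ)) *
          ((f n - w) / (1 - (starRingEnd ℂ) (f n) * w))) z‖ *
      φ (Metric.infDist z E / 6) ^ 2 ≤
      2 * (2 * C + K) ^ 2 * ∑ n ∈ Finset.range N, (1 - ‖f n‖) := by
  change ‖deriv (fun w => ∏ n ∈ range N, blaschkeFactor (f n) w) z‖ * _ ≤ _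
  have hS : ∀ n ∈ range N, f n ∈ stolzRegion φ E K := fun n hn =>
    ⟨hf1 n (mem_range.1 hn), hfS n (mem_range.1 hn)⟩
  have hd : 0 ≤ infDist z E / 6 := div_nonneg infDist_nonneg (by norm_num)
  have hφ : ∀ n ∈ range N, φ (infDist z E / 6) ≤ (2 * C + K) * ‖1 - conj (f n) * z‖ :=
    fun n hn => calc
      φ (infDist z E / 6) ≤ φ (infDist z E / 2) := hmono hd (show (0 : ℝ) ≤ _ by linarith) (by linarith)
      _ ≤ (C + K) * ‖1 - conj (f n) * z‖ :=
        apply_half_infDist_le_of_mem_stolzRegion hC.le hK.le hmono hlin (hS n hn) hz.le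
      _ ≤ (2 * C + K) * ‖1 - conj (f n) * z‖ := by gcongr; linarith
  calc _ ≤ (∑ n ∈ range N, (1 - ‖f n‖ ^ 2) / ‖1 - conj (f n) * z‖ ^ 2) *
        φ (infDist z E / 6) ^ 2 := by
        gcongr
        exact norm_deriv_blaschkeProduct_le (fun n hn => (hS n hn).1) hz
    _ = ∑ n ∈ range N, (1 - ‖f n‖ ^ 2) / ‖1 - conj (f n) * z‖ ^ 2 *
        φ (infDist z E / 6) ^ 2 := sum_mul _ _ _
    _ ≤ ∑ n ∈ range N, 2 * (2 * C + K) ^ 2 * (1 - ‖f n‖) := sum_le_sum fun n hn =>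
        one_sub_sq_div_sq_mul_sq_le (norm_nonneg _) (hS n hn).1.le
          (norm_one_sub_conj_mul_pos (hS n hn).1 hz.le) (hpos _ hd) (hφ n hn)
    _ = _ := (mul_sum _ _ _).symm

theorem main_theorem (φ : ℝ → ℝ) (C K : ℝ) (hC : 0 < C) (hK : 0 < K)
    (hpos : ∀ x ≥ (0:ℝ), 0 ≤ φ x)
    (hcont : ContinuousOn φ (Set.Ici 0))
    (hmono : MonotoneOn φ (Set.Ici 0))
    (hlin : ∀ x ≥ (0:ℝ), φ x ≤ C * x)
    (E : Set ℂ) (hEne : E.Nonempty) (hEcl : IsClosed E)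
    (hEcirc : ∀ t ∈ E, ‖t‖ = 1)
    (N : ℕ) (f : ℕ → ℂ)
    (hf0 : ∀ n < N, f n ≠ 0) (hf1 : ∀ n < N, ‖f n‖ < 1)
    (hfS : ∀ n < N, φ (Metric.infDist (f n) E) ≤ K * (1 - ‖f n‖))
    (z : ℂ) (hz : ‖z‖ < 1) :
    ‖deriv (fun w : ℂ => ∏ n ∈ Finset.range N,
        ((starRingEnd ℂ) (f n) / ((‖f n‖ : ℝ) : ℂ)) *
          ((f n - w) / (1 - (starRingEnd ℂ) (f n) * w))) z‖ *
      φ (Metric.infDist z E / 6) ^ 2 ≤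
      2 * (2 * C + K) ^ 2 * ∑ n ∈ Finset.range N, (1 - ‖f n‖) :=
  main_theorem_general φ C K hC hK hpos hmono hlin E N f hf1 hfS z hz
end
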